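/- arXiv:1810.08544 — 4 statements merged into one kernel-verified Lean document; each statement's English description precedes it below -/
import Mathlib

section
/- Let H be a collection of rooted h-hop trees in a graph G such that (CSSSP property) for every pair of vertices u, v, the path from u to v is the same in every tree of H containing such a path. Let c be a fixed vertex, and let T be the union of the edge sets of the subtrees rooted at c across all trees in H. Then T forms an out-tree rooted at c (i.e., every vertex in T other than c has exactly one parent, and all vertices of T are reachable from c in T). -/
private lemma mem_zip_split {V : Type*} :
    ∀ {p : List V} {a b : V}, (a, b) ∈ p.zip p.tail →
      ∃ l₁ l₂, p = l₁ ++ a :: b :: l₂ := by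
  intro p
  induction p with
  | nil => intro a b h; simp at h
  | cons x xs ih =>
    intro a b h
    cases xs with
    | nil => simp at h
    | cons y ys =>
      simp only [List.tail_cons, List.zip_cons_cons, List.mem_cons, Prod.mk.injEq] at h
      rcases h with ⟨rfl, rfl⟩ | h
      · exact ⟨[], ys, rfl⟩
      · obtain ⟨l₁, l₂, hl⟩ := ih h
        exact ⟨x :: l₁, l₂, by rw [List.cons_append, ← hl]⟩

private lemma mem_zip_of_split {V : Type*} :
    ∀ (l₁ : List V) (a b : V) (l₂ : List V),
      (a, b) ∈ (l₁ ++ a :: b :: l₂).zip (l₁ ++ a :: b :: l₂).tail := by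
  intro l₁
  induction l₁ with
  | nil => intro a b l₂; simp
  | cons x xs ih =>
    intro a b l₂
    have h0 := ih a b l₂
    cases h : xs ++ a :: b :: l₂ with
    | nil => simp at h
    | cons y ys =>
      rw [h] at h0
      simp only [List.cons_append, h, List.tail_cons, List.zip_cons_cons, List.mem_cons]
      exact Or.inr h0

/-- Let `isPath i u v p` mean that the list of vertices `p` is the
(unique) path from `u` to `v` in the `i`-th rooted tree of a collection `H`.
Assuming the basic tree-path axioms (endpoints, simplicity, closure under
splitting at an intermediate vertex) and the CSSSP consistency property (for
every `u, v`, the `u`-to-`v` path is the same in every tree containing one),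
the union `T` of the edge sets of the subtrees rooted at a fixed vertex `c`
forms an out-tree rooted at `c`: every vertex of `T` other than `c` has exactly
one parent in `T`, and every vertex of `T` is reachable from `c` using edges
of `T`. -/
theorem stmt_1 {V ι : Type*} (isPath : ι → V → V → List V → Prop) (c : V)
    (hends : ∀ i u v p, isPath i u v p → p.head? = some u ∧ p.getLast? = some v)
    (hsimple : ∀ i u v p, isPath i u v p → p.Nodup)
    (hsplit : ∀ i u v z p₁ p₂, isPath i u v (p₁ ++ z :: p₂) →
        isPath i u z (p₁ ++ [z]) ∧ isPath i z v (z :: p₂))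
    (hcsssp : ∀ i j u v p q, isPath i u v p → isPath j u v q → p = q)
    (T : Set (V × V))
    (hT : T = {e | ∃ i v p, isPath i c v p ∧ e ∈ p.zip p.tail}) :
    (∀ a b, (a, b) ∈ T → b ≠ c → ∃! a', (a', b) ∈ T) ∧
    (∀ a b, (a, b) ∈ T →
        Relation.ReflTransGen (fun u v => (u, v) ∈ T) c a ∧
        Relation.ReflTransGen (fun u v => (u, v) ∈ T) c b) := by
  -- uniqueness of the parent
  have parent_unique : ∀ a a' b : V, (a, b) ∈ T → (a', b) ∈ T → a = a' := by
    intro a a' b h h'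
    rw [hT] at h h'
    obtain ⟨i, v, p, hp, hm⟩ := h
    obtain ⟨j, w, q, hq, hm'⟩ := h'
    obtain ⟨l₁, l₂, rfl⟩ := mem_zip_split hm
    obtain ⟨m₁, m₂, rfl⟩ := mem_zip_split hm'
    have h1 : isPath i c b ((l₁ ++ [a]) ++ [b]) :=
      (hsplit i c v b (l₁ ++ [a]) l₂ (by simpa using hp)).1
    have h2 : isPath j c b ((m₁ ++ [a']) ++ [b]) :=
      (hsplit j c w b (m₁ ++ [a']) m₂ (by simpa using hq)).1
    have heq := hcsssp i j c b _ _ h1 h2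
    have heq' : l₁ ++ [a] = m₁ ++ [a'] := by
      have := List.append_inj_left' heq (by simp)
      simpa using this
    have := congrArg List.getLast? heq'
    simpa using this
  -- reachability along a path from `c`
  have key : ∀ (l₁ : List V), ∀ i v p (x : V) l₂, isPath i c v p →
      p = l₁ ++ x :: l₂ →
      Relation.ReflTransGen (fun u v => (u, v) ∈ T) c x := by
    intro l₁
    induction l₁ using List.reverseRecOn with
    | nil =>
      intro i v p x l₂ hp he
      subst he
      have hh := (hends i c v _ hp).1
      simp only [List.nil_append, List.head?_cons, Option.some.injEq] at hh
      subst hh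
      exact Relation.ReflTransGen.refl
    | append_singleton l a ih =>
      intro i v p x l₂ hp he
      have h1 := ih i v p a (x :: l₂) hp (by rw [he]; simp)
      have h2 : (a, x) ∈ T := by
        rw [hT]
        refine ⟨i, v, p, hp, ?_⟩
        rw [he, List.append_assoc, List.singleton_append]
        exact mem_zip_of_split l a x l₂
      exact h1.tail h2
  constructor
  · intro a b hab _
    exact ⟨a, hab, fun a' ha' => parent_unique a' a b ha' hab⟩
  · intro a b hab
    have h := hab
    rw [hT] at h
    obtain ⟨i, v, p, hp, hm⟩ := h
    obtain ⟨l₁, l₂, rfl⟩ := mem_zip_split hm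
    exact ⟨key l₁ i v _ a (b :: l₂) hp rfl,
      key (l₁ ++ [a]) i v _ b l₂ hp (by simp)⟩
end

section
/- Let H be a collection of rooted trees in a graph G, one tree T_x per source x in a source set S, satisfying the CSSSP consistency property (for all u, v, the u-to-v path is identical in all trees of H containing one). Let c be a fixed vertex, and let T be the union, over x ∈ S with c ∈ T_x, of the path from x to c in T_x. Then T forms an in-tree rooted at c (every vertex of T has a unique path in T to c). -/
/-!
An edge `(a, b)` of `T` is a consecutive pair on the path `p` from some source `x` to `c` in
`T_x`, so the suffix `a :: b :: …` of `p` is the path from `a` to `c` in `T_x`. By the CSSSP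
property this suffix, hence its second vertex `b`, depends only on `a`. Every consecutive pair of
the suffix is again an edge of `T`, so walking along it takes both `a` and `b` to `c`.
-/

namespace List

variable {α : Type*}

theorem mem_zip_tail_iff {l : List α} {a b : α} :
    (a, b) ∈ l.zip l.tail ↔ ∃ l₁ l₂, l = l₁ ++ a :: b :: l₂ := by
  induction l with
  | nil => simp
  | cons x l ih =>
    cases l with
    | nil => simp [eq_comm (a := [x]), append_eq_singleton_iff]
    | cons y l =>
      simp only [tail_cons, zip_cons_cons, mem_cons, Prod.mk.injEq] at ih ⊢
      rw [ih]
      constructor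
      · rintro (⟨rfl, rfl⟩ | ⟨l₁, l₂, h⟩)
        · exact ⟨[], l, rfl⟩
        · exact ⟨x :: l₁, l₂, by rw [h, cons_append]⟩
      · rintro ⟨_ | ⟨z, l₁⟩, l₂, h⟩
        · simp_all
        · simp only [cons_append, cons.injEq] at h
          exact Or.inr ⟨l₁, l₂, h.2⟩

theorem isChain_mem_zip_tail (l : List α) : l.IsChain fun a b => (a, b) ∈ l.zip l.tail :=
  isChain_iff_forall_rel_of_append_cons_cons.2 fun _ _ _ _ h => mem_zip_tail_iff.2 ⟨_, _, h⟩

end List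

section PathUnion

variable {V ι : Type*} (isPath : ι → V → V → List V → Prop) (src : ι → V) (c : V)

def pathUnion : Set (V × V) := {e | ∃ x p, isPath x (src x) c p ∧ e ∈ p.zip p.tail}

variable {isPath src c}

theorem reflTransGen_pathUnion_of_isSuffix {x : ι} {p l : List V} {u : V}
    (hp : isPath x (src x) c p) (hlast : p.getLast? = some c) (hs : u :: l <:+ p) :
    Relation.ReflTransGen (fun u v => (u, v) ∈ pathUnion isPath src c) u c := by
  refine List.relationReflTransGen_of_exists_isChain_cons l
    (((List.isChain_mem_zip_tail p).suffix hs).imp fun a b h => ⟨x, p, hp, h⟩) ?_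
  obtain ⟨t, rfl⟩ := hs
  simpa [List.getLast?_append, List.getLast?_eq_some_getLast] using hlast

theorem eq_of_mem_pathUnion
    (hsplit : ∀ i u v z p₁ p₂, isPath i u v (p₁ ++ z :: p₂) →
        isPath i u z (p₁ ++ [z]) ∧ isPath i z v (z :: p₂))
    (hcsssp : ∀ i j u v p q, isPath i u v p → isPath j u v q → p = q)
    {a b b' : V} (hb : (a, b) ∈ pathUnion isPath src c) (hb' : (a, b') ∈ pathUnion isPath src c) :
    b = b' := by
  obtain ⟨x, p, hp, hab⟩ := hb
  obtain ⟨y, q, hq, hab'⟩ := hb'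
  obtain ⟨p₁, p₂, rfl⟩ := List.mem_zip_tail_iff.1 hab
  obtain ⟨q₁, q₂, rfl⟩ := List.mem_zip_tail_iff.1 hab'
  have hsuffixes : a :: b :: p₂ = a :: b' :: q₂ :=
    hcsssp _ _ _ _ _ _ (hsplit _ _ _ _ _ _ hp).2 (hsplit _ _ _ _ _ _ hq).2
  exact (List.cons.inj (List.cons.inj hsuffixes).2).1

end PathUnion

theorem stmt_2_general {V ι : Type*} (isPath : ι → V → V → List V → Prop)
    (src : ι → V) (c : V)
    (hends : ∀ i u v p, isPath i u v p → p.head? = some u ∧ p.getLast? = some v)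
    (hsplit : ∀ i u v z p₁ p₂, isPath i u v (p₁ ++ z :: p₂) →
        isPath i u z (p₁ ++ [z]) ∧ isPath i z v (z :: p₂))
    (hcsssp : ∀ i j u v p q, isPath i u v p → isPath j u v q → p = q)
    (T : Set (V × V))
    (hT : T = {e | ∃ x p, isPath x (src x) c p ∧ e ∈ p.zip p.tail}) :
    (∀ a b, (a, b) ∈ T → a ≠ c → ∃! b', (a, b') ∈ T) ∧
    (∀ a b, (a, b) ∈ T →
        Relation.ReflTransGen (fun u v => (u, v) ∈ T) a c ∧
        Relation.ReflTransGen (fun u v => (u, v) ∈ T) b c) := by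
  change T = pathUnion isPath src c at hT
  subst hT
  refine ⟨fun a b hab _ => ⟨b, hab, fun b' hab' => eq_of_mem_pathUnion hsplit hcsssp hab' hab⟩,
    fun a b hab => ?_⟩
  obtain ⟨x, p, hp, hab⟩ := hab
  obtain ⟨p₁, p₂, rfl⟩ := List.mem_zip_tail_iff.1 hab
  have hlast := (hends _ _ _ _ hp).2
  have hsuffix : a :: b :: p₂ <:+ p₁ ++ a :: b :: p₂ := List.suffix_append p₁ _
  exact ⟨reflTransGen_pathUnion_of_isSuffix hp hlast hsuffix,
    reflTransGen_pathUnion_of_isSuffix hp hlast ((List.suffix_cons a _).trans hsuffix)⟩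

/-- Let `isPath x u v p` mean that `p` is the (unique) path from
`u` to `v` in the tree `T_x` rooted at source `x` of a CSSSP collection.  Under
the basic tree-path axioms and the CSSSP consistency property, the union `T`,
over sources `x` whose tree contains `c`, of the edges of the path from `x` to
`c` in `T_x`, forms an in-tree rooted at `c`: every vertex of `T` other than
`c` has exactly one outgoing edge in `T`, and every vertex of `T` reaches `c`
using edges of `T`. -/
theorem stmt_2 {V ι : Type*} (isPath : ι → V → V → List V → Prop)
    (src : ι → V) (c : V)
    (hends : ∀ i u v p, isPath i u v p → p.head? = some u ∧ p.getLast? = some v)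
    (hsimple : ∀ i u v p, isPath i u v p → p.Nodup)
    (hsplit : ∀ i u v z p₁ p₂, isPath i u v (p₁ ++ z :: p₂) →
        isPath i u z (p₁ ++ [z]) ∧ isPath i z v (z :: p₂))
    (hcsssp : ∀ i j u v p q, isPath i u v p → isPath j u v q → p = q)
    (T : Set (V × V))
    (hT : T = {e | ∃ x p, isPath x (src x) c p ∧ e ∈ p.zip p.tail}) :
    (∀ a b, (a, b) ∈ T → a ≠ c → ∃! b', (a, b') ∈ T) ∧
    (∀ a b, (a, b) ∈ T →
        Relation.ReflTransGen (fun u v => (u, v) ∈ T) a c ∧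
        Relation.ReflTransGen (fun u v => (u, v) ∈ T) b c) :=
  stmt_2_general isPath src c hends hsplit hcsssp T hT
end

section
/- Let H be a collection of at most n rooted trees, each of depth at most h, on an n-vertex graph, with at most n² root-to-leaf paths of hop-length exactly h in total. The greedy procedure that repeatedly adds to Q a vertex lying on the maximum number of not-yet-covered root-to-leaf paths of length h terminates with a blocker set Q of size O((n log n)/h): every root-to-leaf path of length h in every tree contains a vertex of Q. -/
open Finset

lemma greedy_aux (n h : ℕ) (V : Type) [Fintype V] [DecidableEq V]
    (hV : Fintype.card V = n) (hn : 0 < n) (hh : 1 ≤ h) (hhn : h ≤ n) :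
    ∀ m : ℕ, ∀ P : Finset (Finset V), P.card = m →
      (∀ p ∈ P, h ≤ p.card) →
      ∀ t : ℕ, ((1 - (h : ℝ) / n) ^ t * P.card < 1) →
      ∃ Q : Finset V, (∀ p ∈ P, ∃ q ∈ Q, q ∈ p) ∧ Q.card ≤ t := by
  intro m
  induction m using Nat.strong_induction_on with
  | _ m ih =>
    intro P hPm hPh t ht
    rcases P.eq_empty_or_nonempty with rfl | hne
    · exact ⟨∅, by simp, Nat.zero_le t⟩
    -- double counting
    have hsum : h * P.card ≤ ∑ v : V, (P.filter (fun p => v ∈ p)).card := by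
      have h1 : ∑ v : V, (P.filter (fun p => v ∈ p)).card
          = ∑ p ∈ P, p.card := by
        simp only [Finset.card_filter]
        rw [Finset.sum_comm]
        congr 1
        ext p
        simp [Finset.card_filter, Finset.filter_mem_eq_inter]
      rw [h1]
      calc h * P.card = ∑ _p ∈ P, h := by rw [Finset.sum_const, smul_eq_mul, mul_comm]
        _ ≤ ∑ p ∈ P, p.card := Finset.sum_le_sum hPh
    -- best vertex
    have huniv : (Finset.univ : Finset V).Nonempty := by
      rw [← Finset.card_pos, Finset.card_univ, hV]; exact hn
    obtain ⟨v, -, hv⟩ : ∃ v ∈ (Finset.univ : Finset V),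
        h * P.card ≤ n * (P.filter (fun p => v ∈ p)).card := by
      apply Finset.exists_le_of_sum_le huniv
      calc ∑ _v : V, h * P.card = n * (h * P.card) := by
            rw [Finset.sum_const, smul_eq_mul, Finset.card_univ, hV]
        _ ≤ n * ∑ v : V, (P.filter (fun p => v ∈ p)).card :=
            Nat.mul_le_mul_left n hsum
        _ = ∑ v : V, n * (P.filter (fun p => v ∈ p)).card := Finset.mul_sum _ _ _
    set c := (P.filter (fun p => v ∈ p)).card with hc
    set P' := P.filter (fun p => v ∉ p) with hP'
    have hsplit : c + P'.card = P.card := Finset.card_filter_add_card_filter_not _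
    have hc1 : 1 ≤ c := by
      by_contra hcon
      push_neg at hcon
      have hc0 : c = 0 := by omega
      rw [hc0, Nat.mul_zero] at hv
      have h1 : 1 ≤ h * P.card :=
        Nat.one_le_iff_ne_zero.mpr (Nat.mul_ne_zero (by omega) hne.card_pos.ne')
      omega
    have hlt : P'.card < m := by omega
    -- real bound for P'
    have hn0 : (0:ℝ) < n := by exact_mod_cast hn
    have hr0 : (0:ℝ) ≤ 1 - (h:ℝ)/n := by
      rw [sub_nonneg, div_le_one hn0]; exact_mod_cast hhn
    have hP'le : (P'.card : ℝ) ≤ (1 - (h:ℝ)/n) * P.card := by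
      have heq : (P'.card : ℝ) = (P.card : ℝ) - c := by
        have h2 : (c:ℝ) + P'.card = P.card := by exact_mod_cast hsplit
        linarith
      rw [heq, sub_mul, one_mul, sub_le_sub_iff_left, div_mul_eq_mul_div,
        div_le_iff₀ hn0]
      calc (h:ℝ) * P.card ≤ n * c := by exact_mod_cast hv
        _ = c * n := mul_comm _ _
    -- t ≥ 1
    obtain ⟨t', rfl⟩ : ∃ t', t = t' + 1 := by
      have ht0 : 0 < t := by
        by_contra h0
        push_neg at h0
        interval_cases t
        rw [pow_zero, one_mul] at ht
        have : (1:ℝ) ≤ P.card := by exact_mod_cast hne.card_pos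
        linarith
      exact ⟨t - 1, by omega⟩
    have hrec : (1 - (h:ℝ)/n) ^ t' * P'.card < 1 := by
      have hpow : (0:ℝ) ≤ (1 - (h:ℝ)/n) ^ t' := pow_nonneg hr0 _
      calc (1 - (h:ℝ)/n) ^ t' * P'.card
          ≤ (1 - (h:ℝ)/n) ^ t' * ((1 - (h:ℝ)/n) * P.card) :=
            mul_le_mul_of_nonneg_left hP'le hpow
        _ = (1 - (h:ℝ)/n) ^ (t' + 1) * P.card := by ring
        _ < 1 := ht
    obtain ⟨Q', hQ'b, hQ'c⟩ := ih P'.card hlt P' rfl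
      (fun p hp => hPh p (Finset.mem_filter.mp hp).1) t' hrec
    refine ⟨insert v Q', ?_, ?_⟩
    · intro p hp
      by_cases hvp : v ∈ p
      · exact ⟨v, Finset.mem_insert_self _ _, hvp⟩
      · obtain ⟨q, hq, hqp⟩ := hQ'b p (Finset.mem_filter.mpr ⟨hp, hvp⟩)
        exact ⟨q, Finset.mem_insert_of_mem hq, hqp⟩
    · calc (insert v Q').card ≤ Q'.card + 1 := Finset.card_insert_le _ _
        _ ≤ t' + 1 := by omega

/-- There is an absolute constant `C` such that for any collection
`P` of at most `n²` root-to-leaf paths of hop-length exactly `h` (each such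
path, viewed as its set of vertices, has at least `h` vertices) in rooted
trees on an `n`-vertex graph, there is a blocker set `Q` of size at most
`C · n · log n / h`: every path of `P` contains a vertex of `Q`.  (This set is
produced by the greedy procedure that repeatedly picks a vertex lying on the
maximum number of not-yet-covered paths.) -/
theorem stmt_5 :
    ∃ C : ℝ, 0 < C ∧
      ∀ (n h : ℕ) (V : Type) [Fintype V] [DecidableEq V]
        (P : Finset (Finset V)),
        Fintype.card V = n → 2 ≤ n → 1 ≤ h →
        P.card ≤ n ^ 2 →
        (∀ p ∈ P, h ≤ p.card) →
        ∃ Q : Finset V,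
          (∀ p ∈ P, ∃ q ∈ Q, q ∈ p) ∧
          (Q.card : ℝ) ≤ C * n * Real.log n / h := by
  refine ⟨4, by norm_num, ?_⟩
  intro n h V _ _ P hV hn2 hh hPn2 hPh
  have hn0 : (0:ℝ) < n := by positivity
  have hh0 : (0:ℝ) < h := by exact_mod_cast hh
  have hlogn : (0:ℝ) < Real.log n := Real.log_pos (by exact_mod_cast hn2)
  rcases P.eq_empty_or_nonempty with rfl | hne
  · exact ⟨∅, by simp, by simp; positivity⟩
  have hhn : h ≤ n := by
    obtain ⟨p, hp⟩ := hne
    calc h ≤ p.card := hPh p hp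
      _ ≤ Fintype.card V := Finset.card_le_univ p
      _ = n := hV
  set x : ℝ := 2 * n * Real.log n / h with hx
  have hx0 : 0 < x := by positivity
  have hx1 : 1 ≤ x := by
    have h1 : Real.log 2 ≤ Real.log n :=
      Real.log_le_log (by norm_num) (by exact_mod_cast hn2)
    have h2 : (0.6931471803 : ℝ) < Real.log 2 := Real.log_two_gt_d9
    have h3 : (h:ℝ) ≤ n := by exact_mod_cast hhn
    rw [hx, le_div_iff₀ hh0]
    nlinarith
  set t := ⌈x⌉₊ with htdef
  have htx : x ≤ t := Nat.le_ceil x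
  have ht1 : t ≠ 0 := by
    have := Nat.ceil_pos.mpr hx0
    omega
  -- key inequality
  have hkey : (1 - (h:ℝ)/n) ^ t * P.card < 1 := by
    have hr0 : (0:ℝ) ≤ 1 - (h:ℝ)/n := by
      rw [sub_nonneg, div_le_one hn0]; exact_mod_cast hhn
    have hrlt : 1 - (h:ℝ)/n < Real.exp (-((h:ℝ)/n)) := by
      have := Real.add_one_lt_exp (show -((h:ℝ)/n) ≠ 0 by
        rw [neg_ne_zero]; positivity)
      linarith
    have hpow : (1 - (h:ℝ)/n) ^ t < Real.exp (-((h:ℝ)/n)) ^ t :=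
      pow_lt_pow_left₀ hrlt hr0 ht1
    have hexp : Real.exp (-((h:ℝ)/n)) ^ t = Real.exp (-(t * ((h:ℝ)/n))) := by
      rw [← Real.exp_nat_mul]; ring_nf
    have hmono : Real.exp (-((t:ℝ) * ((h:ℝ)/n))) ≤ Real.exp (-(2 * Real.log n)) := by
      apply Real.exp_le_exp.mpr
      rw [neg_le_neg_iff]
      calc 2 * Real.log n = x * ((h:ℝ)/n) := by
            rw [hx]; field_simp
        _ ≤ (t:ℝ) * ((h:ℝ)/n) := by
            apply mul_le_mul_of_nonneg_right htx
            positivity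
    have hval : Real.exp (-(2 * Real.log n)) = ((n:ℝ)^2)⁻¹ := by
      rw [show -(2 * Real.log n) = Real.log (((n:ℝ)^2)⁻¹) by
        rw [Real.log_inv, Real.log_pow]; push_cast; ring]
      exact Real.exp_log (by positivity)
    have hfinal : (1 - (h:ℝ)/n) ^ t < ((n:ℝ)^2)⁻¹ := by
      calc (1 - (h:ℝ)/n) ^ t < Real.exp (-((h:ℝ)/n)) ^ t := hpow
        _ = Real.exp (-((t:ℝ) * ((h:ℝ)/n))) := hexp
        _ ≤ Real.exp (-(2 * Real.log n)) := hmono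
        _ = ((n:ℝ)^2)⁻¹ := hval
    have hPcard : (P.card : ℝ) ≤ (n:ℝ)^2 := by exact_mod_cast hPn2
    calc (1 - (h:ℝ)/n) ^ t * P.card
        ≤ (1 - (h:ℝ)/n) ^ t * (n:ℝ)^2 := by
          apply mul_le_mul_of_nonneg_left hPcard (pow_nonneg hr0 _)
      _ < ((n:ℝ)^2)⁻¹ * (n:ℝ)^2 := by
          apply mul_lt_mul_of_pos_right hfinal (by positivity)
      _ = 1 := by field_simp
  obtain ⟨Q, hQb, hQc⟩ := greedy_aux n h V hV (by omega) hh hhn P.card P rfl hPh t hkey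
  refine ⟨Q, hQb, ?_⟩
  have h1 : (Q.card : ℝ) ≤ t := by exact_mod_cast hQc
  have h2 : (t:ℝ) < x + 1 := Nat.ceil_lt_add_one hx0.le
  have h3 : x + 1 ≤ 2 * x := by linarith
  calc (Q.card : ℝ) ≤ (t:ℝ) := h1
    _ ≤ 2 * x := by linarith
    _ = 4 * n * Real.log n / h := by rw [hx]; ring
end

section
/- Let G = (V, E, w) have non-negative integer edge weights and let G' = (V, E, w') be obtained by setting w'(e) = 1 if w(e) = 0 and w'(e) = n²·w(e) otherwise. Fix vertices u, v with no zero-weight path between them, so that the shortest u-to-v distance d(u,v) in G is at least 1. If p' is a u-to-v path in G' with w'(p') ≤ (1 + ε/3)·d'(u,v), where d'(u,v) is the shortest distance in G', and ε > 3/n, then w'(p')/n² ≤ (1 + ε)·d(u,v). -/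
/-- Let `w` be the non-negative integer edge weights of `G` on
`n` vertices and let `w'` be the modified weights of `G'`: zero weights become
`1` and positive weights `w(e)` become `n²·w(e)`.  Fix `u, v` with no
zero-weight `u`-to-`v` path, so the shortest distance `d = d(u,v)` in `G`
satisfies `d ≥ 1`; let `p` be a `G`-shortest `u`-to-`v` path (so its `w`-weight
is `d` and it has at most `n` hops, whence `d'(u,v) ≤ w'(p)`), and let `p'` be
a `u`-to-`v` path in `G'` with `w'(p') ≤ (1 + ε/3)·d'(u,v)`.  If `ε > 3/n`
then `w'(p')/n² ≤ (1 + ε)·d`. -/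
theorem stmt_12 {V : Type*} (n : ℕ) (hn : 1 ≤ n)
    (w : V × V → ℕ)
    (w' : V × V → ℕ)
    (hw' : ∀ e, w' e = if w e = 0 then 1 else n ^ 2 * w e)
    (ε : ℝ) (hε : 3 / (n : ℝ) < ε)
    (p p' : List (V × V))   -- `p`: a `G`-shortest `u`-`v` path; `p'`: the approximate path in `G'`
    (d d' : ℕ)              -- `d = d(u,v)` in `G`; `d' = d'(u,v)` in `G'`
    (hpd : (p.map w).sum = d)
    (hd1 : 1 ≤ d)
    (hphops : p.length ≤ n)
    (hd' : d' ≤ (p.map w').sum)     -- `d'` is the shortest distance in `G'`, and `p` is a candidate path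
    (happrox : ((p'.map w').sum : ℝ) ≤ (1 + ε / 3) * (d' : ℝ)) :
    ((p'.map w').sum : ℝ) / (n : ℝ) ^ 2 ≤ (1 + ε) * (d : ℝ) := by
  -- key: (p.map w').sum ≤ n^2 * d + p.length
  have keygen : ∀ q : List (V × V), (q.map w').sum ≤ n ^ 2 * (q.map w).sum + q.length := by
    intro q
    induction q with
    | nil => simp
    | cons e t ih =>
      simp only [List.map_cons, List.sum_cons, List.length_cons]
      have h1 : w' e ≤ n ^ 2 * w e + 1 := by
        rw [hw' e]; split <;> simp_all <;> nlinarith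
      calc w' e + (t.map w').sum ≤ (n ^ 2 * w e + 1) + (n ^ 2 * (t.map w).sum + t.length) :=
            Nat.add_le_add h1 ih
        _ = n ^ 2 * (w e + (t.map w).sum) + (t.length + 1) := by ring
  have key : (p.map w').sum ≤ n ^ 2 * d + p.length := by rw [← hpd]; exact keygen p
  have hkey : (d' : ℝ) ≤ (n : ℝ) ^ 2 * d + n := by
    have : (d' : ℕ) ≤ n ^ 2 * d + n := le_trans hd' (le_trans key (by omega))
    exact_mod_cast this
  have hN : (1 : ℝ) ≤ (n : ℝ) := by exact_mod_cast hn
  have hN0 : (0 : ℝ) < (n : ℝ) := by linarith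
  have hεN : 3 < ε * n := by
    rw [div_lt_iff₀ hN0] at hε; linarith
  have hd1' : (1 : ℝ) ≤ (d : ℝ) := by exact_mod_cast hd1
  have hε0 : 0 < ε := by nlinarith
  rw [div_le_iff₀ (by positivity)]
  have h2 : ((p'.map w').sum : ℝ) ≤ (1 + ε / 3) * ((n : ℝ) ^ 2 * d + n) := by
    refine le_trans happrox ?_
    have : (0 : ℝ) < 1 + ε / 3 := by linarith
    nlinarith
  nlinarith [mul_le_mul_of_nonneg_left hd1' (le_of_lt hε0),
    mul_pos hε0 hN0, sq_nonneg ((n:ℝ) - 1)]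
end
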